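/- arXiv:2604.08234 — 2 statements merged into one kernel-verified Lean document; each statement's English description precedes it below -/
import Mathlib

section
/- Let 𝓘 = (I_1,…,I_t) be a cycle of length t ≥ 4 over Σ = [q], and let c_{t−1} denote the capacity of a path of length t−1 over Σ. Then c_{t−1} ≤ cap(𝓘); moreover cap(𝓘) ≤ (1/√3 + (1 + 1/√3) H(2−√3)) log_q 2 when t = 4, and cap(𝓘) ≤ log_q 4 when t ≥ 5. -/
/-- The output of a single coloring channel `I`: the subsequence of `x`
consisting (in order) of the letters of `x` that belong to `I`. -/
def channelOutput {q : ℕ} (I : Finset (Fin q)) (x : List (Fin q)) : List (Fin q) :=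
  x.filter (fun a => a ∈ I)

/-- The set `A_𝓘(n)` of all tuples of channel outputs over inputs of length `n`. -/
def channelOutputs {q : ℕ} {ι : Type} (𝓘 : ι → Finset (Fin q)) (n : ℕ) :
    Set (ι → List (Fin q)) :=
  { y | ∃ x : List (Fin q), x.length = n ∧ y = fun i => channelOutput (𝓘 i) x }

/-- The capacity of a sequence of coloring channels:
`limsup_{n→∞} (1/n) log_q |A_𝓘(n)|`. -/
noncomputable def capacity {q : ℕ} {ι : Type} (𝓘 : ι → Finset (Fin q)) : ℝ :=
  Filter.atTop.limsup fun n : ℕ =>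
    Real.logb q ((channelOutputs 𝓘 n).ncard : ℝ) / (n : ℝ)

/-- The binary entropy function (with `H(0) = H(1) = 0`). -/
noncomputable def binH (x : ℝ) : ℝ :=
  -(x * Real.logb 2 x) - (1 - x) * Real.logb 2 (1 - x)

/-!
After a permutation of the letters taking `τ` to `σ`, the path of length `t - 1` is the cycle
with its channel `{σ s, σ 0}` removed, so its outputs are a projection of the cycle's outputs.

Every channel of the cycle sees two letters and every letter is seen by two channels, so an
output tuple is determined by its `t` lengths (each at most `n`) and one bit for each of the at
most `2n` observed letters: there are at most `(n + 1)^t 4^n` outputs.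

For `t = 4`, letters off the cycle are invisible, so it suffices to count the outputs of the
standard 4-cycle on `Fin 4` for all input lengths `m ≤ n`. Swapping adjacent letters that share
no channel does not change the outputs, so every output tuple comes from an input with no
adjacent independent letters in decreasing order, i.e. a word avoiding the factors `2 0` and
`3 1`. A transfer-matrix bound with weights `(1, 1, 3/2, 3/2)` counts these by `5 (7/2)^m`, and
`7/2 ≤ 2 + √3`, whose base-2 logarithm is the entropy expression of the statement.
-/

open Finset

section Words

variable (α : Type*) [Fintype α]

def wordsOfLength : ℕ → Finset (List α)
  | 0 => {[]}
  | n + 1 => (univ ×ˢ wordsOfLength n).map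
      ⟨fun p => p.1 :: p.2, fun p p' h => by simpa [Prod.ext_iff] using h⟩

variable {α}

@[simp]
theorem mem_wordsOfLength {n : ℕ} {x : List α} : x ∈ wordsOfLength α n ↔ x.length = n := by
  induction n generalizing x with
  | zero => simp [wordsOfLength]
  | succ n ih =>
    cases x with
    | nil => simp [wordsOfLength]
    | cons a x =>
      simp only [wordsOfLength, mem_map, mem_product, mem_univ, true_and, ih, Prod.exists,
        List.length_cons, Nat.add_right_cancel_iff]
      exact ⟨fun ⟨_, _, hy, h⟩ => (List.cons.inj h).2 ▸ hy, fun h => ⟨a, x, h, rfl⟩⟩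

theorem card_wordsOfLength (n : ℕ) : #(wordsOfLength α n) = Fintype.card α ^ n := by
  induction n with
  | zero => rfl
  | succ n ih => rw [wordsOfLength, card_map, card_product, card_univ, ih, pow_succ, mul_comm]

theorem sum_wordsOfLength_succ {M : Type*} [AddCommMonoid M] (f : List α → M) (n : ℕ) :
    ∑ x ∈ wordsOfLength α (n + 1), f x = ∑ a, ∑ x ∈ wordsOfLength α n, f (a :: x) := by
  rw [wordsOfLength, sum_map, sum_product]
  rfl

end Words

section Capacity

variable {q : ℕ} {ι ι' : Type}

theorem channelOutputs_eq_image (𝓘 : ι → Finset (Fin q)) (n : ℕ) :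
    channelOutputs 𝓘 n = (fun x i => channelOutput (𝓘 i) x) '' ↑(wordsOfLength (Fin q) n) := by
  ext y
  simp [channelOutputs, eq_comm]

theorem channelOutputs_finite (𝓘 : ι → Finset (Fin q)) (n : ℕ) :
    (channelOutputs 𝓘 n).Finite := by
  rw [channelOutputs_eq_image]
  exact (finite_toSet _).image _

theorem ncard_channelOutputs_le_pow (𝓘 : ι → Finset (Fin q)) (n : ℕ) :
    (channelOutputs 𝓘 n).ncard ≤ q ^ n := by
  rw [channelOutputs_eq_image]
  refine (Set.ncard_image_le (finite_toSet _)).trans ?_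
  rw [Set.ncard_coe_finset, card_wordsOfLength, Fintype.card_fin]

theorem ncard_channelOutputs_pos (hq : 0 < q) (𝓘 : ι → Finset (Fin q)) (n : ℕ) :
    0 < (channelOutputs 𝓘 n).ncard :=
  (Set.ncard_pos (channelOutputs_finite 𝓘 n)).2
    ⟨_, List.replicate n ⟨0, hq⟩, List.length_replicate, rfl⟩

theorem logb_ncard_channelOutputs_div_nonneg (hq : 1 < q) (𝓘 : ι → Finset (Fin q)) (n : ℕ) :
    0 ≤ Real.logb q ((channelOutputs 𝓘 n).ncard : ℝ) / n :=
  div_nonneg (Real.logb_nonneg (by exact_mod_cast hq)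
    (by exact_mod_cast ncard_channelOutputs_pos (by omega) 𝓘 n)) n.cast_nonneg

theorem logb_ncard_channelOutputs_div_le_one (hq : 1 < q) (𝓘 : ι → Finset (Fin q)) (n : ℕ) :
    Real.logb q ((channelOutputs 𝓘 n).ncard : ℝ) / n ≤ 1 := by
  rcases n.eq_zero_or_pos with rfl | hn
  · simp
  have hq' : (1 : ℝ) < q := by exact_mod_cast hq
  calc Real.logb q ((channelOutputs 𝓘 n).ncard : ℝ) / n ≤ Real.logb q ((q : ℝ) ^ n) / n :=
        div_le_div_of_nonneg_right (Real.logb_le_logb_of_le hq'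
          (by exact_mod_cast ncard_channelOutputs_pos (by omega) 𝓘 n)
          (by exact_mod_cast ncard_channelOutputs_le_pow 𝓘 n)) n.cast_nonneg
    _ = 1 := by
        rw [Real.logb_pow, Real.logb_self_eq_one hq', mul_one, div_self (by positivity)]

theorem capacity_le_capacity_of_ncard_le (hq : 1 < q) {𝓘 : ι → Finset (Fin q)}
    {𝓙 : ι' → Finset (Fin q)}
    (h : ∀ n, (channelOutputs 𝓙 n).ncard ≤ (channelOutputs 𝓘 n).ncard) :
    capacity 𝓙 ≤ capacity 𝓘 :=
  Filter.limsup_le_limsup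
    (Filter.Eventually.of_forall fun n => div_le_div_of_nonneg_right
      (Real.logb_le_logb_of_le (by exact_mod_cast hq)
        (by exact_mod_cast ncard_channelOutputs_pos (by omega) 𝓙 n) (by exact_mod_cast h n))
      n.cast_nonneg)
    (Filter.isBoundedUnder_of ⟨0, logb_ncard_channelOutputs_div_nonneg hq 𝓙⟩).isCoboundedUnder_le
    (Filter.isBoundedUnder_of ⟨1, logb_ncard_channelOutputs_div_le_one hq 𝓘⟩)

theorem tendsto_log_natCast_add_one_div :
    Filter.Tendsto (fun n : ℕ => Real.log (n + 1) / n) Filter.atTop (nhds 0) := by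
  have h := (Real.tendsto_pow_log_div_mul_add_atTop 1 (-1) 1 one_ne_zero).comp
    (Filter.tendsto_atTop_add_const_right _ 1 tendsto_natCast_atTop_atTop)
  refine h.congr fun n => ?_
  simp

theorem capacity_le_logb_of_ncard_le (hq : 1 < q) (𝓘 : ι → Finset (Fin q)) {K lam : ℝ} (E : ℕ)
    (hK : 0 < K) (hlam : 0 < lam)
    (h : ∀ n : ℕ, ((channelOutputs 𝓘 n).ncard : ℝ) ≤ K * (n + 1) ^ E * lam ^ n) :
    capacity 𝓘 ≤ Real.logb q lam := by
  have hq' : (1 : ℝ) < q := by exact_mod_cast hq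
  set g : ℕ → ℝ := fun n => Real.logb q K / n +
    E / Real.log q * (Real.log (n + 1) / n) + Real.logb q lam
  have hg : Filter.Tendsto g Filter.atTop (nhds (Real.logb q lam)) := by
    simpa using ((tendsto_const_div_atTop_nhds_zero_nat _).add
      (tendsto_log_natCast_add_one_div.const_mul _)).add_const (Real.logb q lam)
  have hfg : ∀ n ≥ 1, Real.logb q ((channelOutputs 𝓘 n).ncard : ℝ) / n ≤ g n := by
    intro n hn
    have hlog : Real.logb q (K * (n + 1) ^ E * lam ^ n) =
        Real.logb q K + E * (Real.log (n + 1) / Real.log q) + n * Real.logb q lam := by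
      rw [Real.logb_mul (by positivity) (by positivity), Real.logb_mul (by positivity)
        (by positivity), Real.logb_pow, Real.logb_pow]
      simp only [Real.logb]
    have hn' : (0 : ℝ) < n := by exact_mod_cast hn
    calc Real.logb q ((channelOutputs 𝓘 n).ncard : ℝ) / n
        ≤ Real.logb q (K * (n + 1) ^ E * lam ^ n) / n := div_le_div_of_nonneg_right
          (Real.logb_le_logb_of_le hq'
            (by exact_mod_cast ncard_channelOutputs_pos (by omega) 𝓘 n) (h n)) hn'.le
      _ = g n := by
          rw [hlog]
          simp only [g]
          field_simp
  calc capacity 𝓘 ≤ Filter.limsup g Filter.atTop :=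
        Filter.limsup_le_limsup (Filter.eventually_atTop.2 ⟨1, hfg⟩)
          (Filter.isBoundedUnder_of
            ⟨0, logb_ncard_channelOutputs_div_nonneg hq 𝓘⟩).isCoboundedUnder_le
          hg.isBoundedUnder_le
    _ = Real.logb q lam := hg.limsup_eq

end Capacity

section Relabel

variable {q : ℕ} {ι ι' : Type}

theorem ncard_channelOutputs_le_of_perm {𝓘 : ι → Finset (Fin q)} {𝓙 : ι' → Finset (Fin q)}
    (F : ι' → ι) (e : Equiv.Perm (Fin q)) (h : ∀ j a, a ∈ 𝓙 j ↔ e a ∈ 𝓘 (F j)) (n : ℕ) :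
    (channelOutputs 𝓙 n).ncard ≤ (channelOutputs 𝓘 n).ncard := by
  have hsub : channelOutputs 𝓙 n ⊆
      (fun y j => (y (F j)).map e.symm) '' channelOutputs 𝓘 n := by
    rintro - ⟨x, rfl, rfl⟩
    refine ⟨_, ⟨x.map e, List.length_map _, rfl⟩, funext fun j => ?_⟩
    simp [channelOutput, List.filter_map, Function.comp_def, h]
  exact (Set.ncard_le_ncard hsub ((channelOutputs_finite 𝓘 n).image _)).trans
    (Set.ncard_image_le (channelOutputs_finite 𝓘 n))

theorem exists_perm_comp_eq {m : ℕ} {τ σ : Fin m → Fin q} (hτ : Function.Injective τ)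
    (hσ : Function.Injective σ) : ∃ e : Equiv.Perm (Fin q), ∀ j, e (τ j) = σ j := by
  classical
  let f : {a // a ∈ Set.range τ} ≃ {a // a ∈ Set.range σ} :=
    (Equiv.ofInjective τ hτ).symm.trans (Equiv.ofInjective σ hσ)
  refine ⟨f.extendSubtype, fun j => ?_⟩
  rw [Equiv.extendSubtype_apply_of_mem f _ ⟨j, rfl⟩]
  simp [f]

end Relabel

theorem Set.InjOn.list_map {α β : Type*} {f : α → β} {s : Set α} (hf : s.InjOn f) :
    {l : List α | ∀ a ∈ l, a ∈ s}.InjOn (List.map f) := by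
  intro l₁ h₁ l₂ h₂ h
  induction l₁ generalizing l₂ with
  | nil => exact (List.map_eq_nil_iff.1 h.symm).symm
  | cons a l₁ ih =>
    obtain _ | ⟨b, l₂⟩ := l₂
    · simp at h
    obtain ⟨ha, h₁⟩ := List.forall_mem_cons.1 h₁
    obtain ⟨hb, h₂⟩ := List.forall_mem_cons.1 h₂
    obtain ⟨hab, h⟩ := List.cons.inj h
    rw [hf ha hb hab, ih h₁ h₂ h]

theorem exists_injOn_bool_of_card_le_two {α : Type*} {s : Finset α} (hs : #s ≤ 2) :
    ∃ c : α → Bool, Set.InjOn c s := by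
  classical
  obtain ⟨e⟩ := Function.Embedding.nonempty_of_card_le (α := s) (β := Bool) (by simpa using hs)
  refine ⟨fun a => if h : a ∈ s then e ⟨a, h⟩ else false, fun a ha b hb hab => ?_⟩
  simp only [dif_pos (mem_coe.1 ha), dif_pos (mem_coe.1 hb)] at hab
  simpa using e.injective hab

section TwoLetterChannels

variable {q : ℕ} {ι : Type} [Fintype ι]

theorem sum_length_channelOutput_le (𝓘 : ι → Finset (Fin q)) {d : ℕ}
    (hdeg : ∀ a, #{i | a ∈ 𝓘 i} ≤ d) (x : List (Fin q)) :
    ∑ i, (channelOutput (𝓘 i) x).length ≤ d * x.length := by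
  induction x with
  | nil => simp [channelOutput]
  | cons a x ih =>
    have hstep : ∀ i, (channelOutput (𝓘 i) (a :: x)).length =
        (if a ∈ 𝓘 i then 1 else 0) + (channelOutput (𝓘 i) x).length := by
      intro i
      by_cases h : a ∈ 𝓘 i <;> simp [channelOutput, h, add_comm]
    rw [sum_congr rfl fun i _ => hstep i, sum_add_distrib, sum_boole, List.length_cons, mul_add]
    push_cast
    linarith [hdeg a]

theorem ncard_channelOutputs_le_of_card_le_two (𝓘 : ι → Finset (Fin q)) {d : ℕ}
    (hcard : ∀ i, #(𝓘 i) ≤ 2) (hdeg : ∀ a, #{i | a ∈ 𝓘 i} ≤ d) (n : ℕ) :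
    (channelOutputs 𝓘 n).ncard ≤ (n + 1) ^ Fintype.card ι * 2 ^ (d * n) := by
  classical
  choose c hc using fun i => exists_injOn_bool_of_card_le_two (hcard i)
  let Φ : (ι → List (Fin q)) → ι → List Bool := fun y i => (y i).map (c i)
  let L := {ℓ ∈ Fintype.piFinset fun _ : ι => range (n + 1) | ∑ i, ℓ i ≤ d * n}
  let T := L.biUnion fun ℓ => Fintype.piFinset fun i => wordsOfLength Bool (ℓ i)
  have hmaps : Set.MapsTo Φ (channelOutputs 𝓘 n) T := by
    rintro - ⟨x, rfl, rfl⟩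
    simp only [T, L, coe_biUnion, coe_filter, Fintype.mem_piFinset, mem_range, Set.mem_iUnion,
      mem_coe, mem_wordsOfLength, exists_prop]
    refine ⟨fun i => (channelOutput (𝓘 i) x).length, ⟨fun i => ?_, ?_⟩, fun i => ?_⟩
    · exact Nat.lt_succ_of_le (List.length_filter_le _ _)
    · exact sum_length_channelOutput_le 𝓘 hdeg x
    · exact List.length_map _
  have hinj : Set.InjOn Φ (channelOutputs 𝓘 n) := by
    rintro - ⟨x, -, rfl⟩ - ⟨x', -, rfl⟩ h
    funext i
    refine (hc i).list_map ?_ ?_ (congrFun h i) <;>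
      exact fun a ha => by simpa using List.of_mem_filter ha
  calc (channelOutputs 𝓘 n).ncard ≤ #T := by
        simpa using Set.ncard_le_ncard_of_injOn Φ hmaps hinj (finite_toSet T)
    _ ≤ ∑ ℓ ∈ L, 2 ^ (d * n) := by
        refine card_biUnion_le.trans (sum_le_sum fun ℓ hℓ => ?_)
        rw [Fintype.card_piFinset]
        simp only [card_wordsOfLength, Fintype.card_bool, prod_pow_eq_pow_sum]
        exact Nat.pow_le_pow_right two_pos (mem_filter.1 hℓ).2
    _ ≤ (n + 1) ^ Fintype.card ι * 2 ^ (d * n) := by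
        rw [sum_const, smul_eq_mul]
        refine Nat.mul_le_mul_right _ ((card_filter_le _ _).trans ?_)
        simp

end TwoLetterChannels

section LexNormalForm

variable {q : ℕ} {ι : Type}

def ChannelIndependent (𝓘 : ι → Finset (Fin q)) (a b : Fin q) : Prop :=
  ∀ i, a ∈ 𝓘 i → b ∉ 𝓘 i

def IsLexNormal (𝓘 : ι → Finset (Fin q)) (x : List (Fin q)) : Prop :=
  x.IsChain fun a b => ¬(ChannelIndependent 𝓘 a b ∧ b < a)

instance [Fintype ι] (𝓘 : ι → Finset (Fin q)) : DecidableRel (ChannelIndependent 𝓘) :=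
  fun _ _ => inferInstanceAs (Decidable (∀ _, _))

instance [Fintype ι] (𝓘 : ι → Finset (Fin q)) : DecidablePred (IsLexNormal 𝓘) :=
  fun _ => inferInstanceAs (Decidable (List.IsChain _ _))

theorem channelOutput_append_swap {𝓘 : ι → Finset (Fin q)} {a b : Fin q}
    (h : ChannelIndependent 𝓘 a b) (i : ι) (l₁ l₂ : List (Fin q)) :
    channelOutput (𝓘 i) (l₁ ++ a :: b :: l₂) = channelOutput (𝓘 i) (l₁ ++ b :: a :: l₂) := by
  have := h i
  by_cases ha : a ∈ 𝓘 i <;> by_cases hb : b ∈ 𝓘 i <;>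
    simp_all [channelOutput, List.filter_append]

theorem exists_isLexNormal (𝓘 : ι → Finset (Fin q)) (x : List (Fin q)) :
    ∃ x', x'.length = x.length ∧ IsLexNormal 𝓘 x' ∧
      ∀ i, channelOutput (𝓘 i) x' = channelOutput (𝓘 i) x := by
  let S := {x' : List (Fin q) | x'.length = x.length ∧
    ∀ i, channelOutput (𝓘 i) x' = channelOutput (𝓘 i) x}
  obtain ⟨x', ⟨hlen, hout⟩, hmin⟩ := S.exists_min_image id
    ((List.finite_length_eq _ _).subset fun _ h => h.1) ⟨x, rfl, fun _ => rfl⟩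
  refine ⟨x', hlen, List.isChain_iff_forall_rel_of_append_cons_cons.2 ?_, hout⟩
  rintro a b l₁ l₂ rfl ⟨hab, hlt⟩
  have hswap : l₁ ++ b :: a :: l₂ ∈ S :=
    ⟨by simpa using hlen, fun i => (channelOutput_append_swap hab i l₁ l₂).symm.trans (hout i)⟩
  exact (hmin _ hswap).not_gt (List.append_left_lt (List.cons_lt_cons_iff.2 (Or.inl hlt)))

theorem ncard_channelOutputs_le_card_isLexNormal [Fintype ι] (𝓘 : ι → Finset (Fin q)) (n : ℕ) :
    (channelOutputs 𝓘 n).ncard ≤ #{x ∈ wordsOfLength (Fin q) n | IsLexNormal 𝓘 x} := by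
  have hsub : channelOutputs 𝓘 n ⊆ (fun x i => channelOutput (𝓘 i) x) ''
      ↑{x ∈ wordsOfLength (Fin q) n | IsLexNormal 𝓘 x} := by
    rintro - ⟨x, rfl, rfl⟩
    obtain ⟨x', hlen, hx', hout⟩ := exists_isLexNormal 𝓘 x
    exact ⟨x', by simp [hlen, hx'], funext hout⟩
  calc (channelOutputs 𝓘 n).ncard ≤ _ := Set.ncard_le_ncard hsub (Set.toFinite _)
    _ ≤ _ := Set.ncard_image_le (finite_toSet _)
    _ = _ := Set.ncard_coe_finset _

end LexNormalForm

section Chains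

variable {α : Type*} [Fintype α] (R : α → α → Prop) [DecidableRel R]

theorem sum_ite_isChain_cons_le (w : α → ℝ) {lam : ℝ} (hlam : 0 ≤ lam)
    (hw : ∀ b, ∑ a with R a b, w a ≤ lam * w b) (n : ℕ) :
    ∑ b, ∑ t ∈ wordsOfLength α n, (if (b :: t).IsChain R then w b else 0) ≤
      lam ^ n * ∑ b, w b := by
  induction n with
  | zero => simp [wordsOfLength]
  | succ n ih =>
    calc ∑ a, ∑ t ∈ wordsOfLength α (n + 1), (if (a :: t).IsChain R then w a else 0)
        = ∑ b, ∑ t ∈ wordsOfLength α n,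
            (if (b :: t).IsChain R then ∑ a with R a b, w a else 0) := by
          simp_rw [sum_wordsOfLength_succ, List.isChain_cons_cons, ite_and, sum_filter]
          rw [sum_comm]
          refine sum_congr rfl fun b _ => ?_
          rw [sum_comm]
          refine sum_congr rfl fun t _ => ?_
          split_ifs <;> simp
      _ ≤ ∑ b, ∑ t ∈ wordsOfLength α n, (if (b :: t).IsChain R then lam * w b else 0) := by
          gcongr with b _ t _
          split_ifs
          exacts [hw b, le_rfl]
      _ = lam * ∑ b, ∑ t ∈ wordsOfLength α n, (if (b :: t).IsChain R then w b else 0) := by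
          simp_rw [mul_sum, mul_ite, mul_zero]
      _ ≤ lam ^ (n + 1) * ∑ b, w b := by
          rw [pow_succ', mul_assoc]
          exact mul_le_mul_of_nonneg_left ih hlam

theorem card_isChain_le (w : α → ℝ) (hw₁ : ∀ a, 1 ≤ w a) {lam : ℝ} (hlam : 0 ≤ lam)
    (hw : ∀ b, ∑ a with R a b, w a ≤ lam * w b) (n : ℕ) :
    (#{x ∈ wordsOfLength α (n + 1) | x.IsChain R} : ℝ) ≤ lam ^ n * ∑ b, w b := by
  calc (#{x ∈ wordsOfLength α (n + 1) | x.IsChain R} : ℝ)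
      = ∑ b, ∑ t ∈ wordsOfLength α n, (if (b :: t).IsChain R then 1 else 0) := by
        rw [card_filter, sum_wordsOfLength_succ]
        push_cast
        rfl
    _ ≤ ∑ b, ∑ t ∈ wordsOfLength α n, (if (b :: t).IsChain R then w b else 0) := by
        gcongr with b _ t _
        split_ifs
        exacts [hw₁ b, le_rfl]
    _ ≤ lam ^ n * ∑ b, w b := sum_ite_isChain_cons_le R w hlam hw n

end Chains

section Embedding

variable {q k : ℕ} {ι : Type} {σ : Fin k → Fin q}

theorem channelOutput_image (hσ : Function.Injective σ) (I : Finset (Fin k))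
    (x : List (Fin q)) :
    channelOutput (I.image σ) x =
      (channelOutput I (x.filterMap (Function.partialInv σ))).map σ := by
  induction x with
  | nil => rfl
  | cons a x ih =>
    rcases h : Function.partialInv σ a with _ | j
    · have ha : a ∉ I.image σ := by
        simp only [mem_image, not_exists, not_and]
        intro j _ hj
        simp [(hσ.isPartialInv j a).2 hj] at h
      rw [channelOutput, List.filter_cons_of_neg (by simpa using ha),
        List.filterMap_cons_none h]
      exact ih
    · obtain rfl := (hσ.isPartialInv j a).1 h
      rw [List.filterMap_cons_some h]
      by_cases hj : j ∈ I
      · rw [channelOutput, channelOutput, List.filter_cons_of_pos (by simpa using ⟨j, hj, rfl⟩),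
          List.filter_cons_of_pos (by simpa using hj), List.map_cons]
        exact congrArg _ ih
      · rw [channelOutput, channelOutput, List.filter_cons_of_neg (by simpa [hσ.eq_iff] using hj),
          List.filter_cons_of_neg (by simpa using hj)]
        exact ih

theorem ncard_channelOutputs_image_le (hσ : Function.Injective σ) (𝓘 : ι → Finset (Fin k))
    (n : ℕ) : (channelOutputs (fun i => (𝓘 i).image σ) n).ncard ≤
      ∑ m ∈ range (n + 1), (channelOutputs 𝓘 m).ncard := by
  have hsub : channelOutputs (fun i => (𝓘 i).image σ) n ⊆
      ⋃ m ∈ range (n + 1), (fun y i => (y i).map σ) '' channelOutputs 𝓘 m := by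
    rintro - ⟨x, rfl, rfl⟩
    simp only [Set.mem_iUnion]
    exact ⟨_, mem_range.2 (Nat.lt_succ_of_le (List.length_filterMap_le _ _)), _,
      ⟨_, rfl, rfl⟩, funext fun i => (channelOutput_image hσ _ _).symm⟩
  calc _ ≤ (⋃ m ∈ range (n + 1), (fun y i => (y i).map σ) '' channelOutputs 𝓘 m).ncard :=
        Set.ncard_le_ncard hsub
          ((finite_toSet _).biUnion fun m _ => (channelOutputs_finite 𝓘 m).image _)
    _ ≤ ∑ m ∈ range (n + 1), ((fun y i => (y i).map σ) '' channelOutputs 𝓘 m).ncard :=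
        set_ncard_biUnion_le _ _
    _ ≤ _ := sum_le_sum fun m _ => Set.ncard_image_le (channelOutputs_finite 𝓘 m)

end Embedding

section Cycle

variable {q s : ℕ} {σ : Fin (s + 1) → Fin q} {𝓘 : Fin (s + 1) → Finset (Fin q)}

def cycleChannels (s : ℕ) (i : Fin (s + 1)) : Finset (Fin (s + 1)) := {i - 1, i}

theorem eq_image_cycleChannels (h𝓘 : ∀ i, 𝓘 i = {σ (i - 1), σ i}) :
    𝓘 = fun i => (cycleChannels s i).image σ :=
  funext fun i => by simp [h𝓘, cycleChannels, image_insert]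

theorem card_filter_mem_cycle_le_two (hσ : Function.Injective σ)
    (h𝓘 : ∀ i, 𝓘 i = {σ (i - 1), σ i}) (a : Fin q) : #{i | a ∈ 𝓘 i} ≤ 2 := by
  by_cases ha : ∃ k, σ k = a
  · obtain ⟨k, rfl⟩ := ha
    refine (card_le_card fun i hi => ?_).trans (card_le_two (a := k + 1) (b := k))
    simp only [mem_filter, mem_univ, true_and, h𝓘, mem_insert, mem_singleton, hσ.eq_iff] at hi
    rcases hi with rfl | rfl <;> simp
  · have hmem : ∀ i, a ∉ 𝓘 i := fun i h => by
      rw [h𝓘, mem_insert, mem_singleton] at h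
      exact h.elim (fun h => ha ⟨_, h.symm⟩) fun h => ha ⟨_, h.symm⟩
    simp [hmem]

theorem capacity_path_le_capacity_cycle (hq : 1 < q) (hσ : Function.Injective σ)
    (h𝓘 : ∀ i, 𝓘 i = {σ (i - 1), σ i}) {τ : Fin (s + 1) → Fin q} (hτ : Function.Injective τ)
    {𝓙 : Fin s → Finset (Fin q)} (h𝓙 : ∀ i : Fin s, 𝓙 i = {τ i.castSucc, τ i.succ}) :
    capacity 𝓙 ≤ capacity 𝓘 := by
  obtain ⟨e, he⟩ := exists_perm_comp_eq hτ hσ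
  refine capacity_le_capacity_of_ncard_le hq
    (ncard_channelOutputs_le_of_perm Fin.succ e fun j a => ?_)
  rw [h𝓙, h𝓘, show (j.succ : Fin (s + 1)) - 1 = j.castSucc from
    sub_eq_iff_eq_add.2 Fin.coeSucc_eq_succ.symm, ← he, ← he]
  simp [e.injective.eq_iff]

theorem capacity_cycle_le_logb_four (hq : 1 < q) (hσ : Function.Injective σ)
    (h𝓘 : ∀ i, 𝓘 i = {σ (i - 1), σ i}) : capacity 𝓘 ≤ Real.logb q 4 := by
  refine capacity_le_logb_of_ncard_le hq 𝓘 (s + 1) one_pos four_pos fun n => ?_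
  have h := ncard_channelOutputs_le_of_card_le_two 𝓘 (fun i => h𝓘 i ▸ card_le_two)
    (card_filter_mem_cycle_le_two hσ h𝓘) n
  rw [Fintype.card_fin, pow_mul] at h
  exact_mod_cast h.trans_eq (by ring)

end Cycle

section FourCycle

variable {q : ℕ}

theorem filter_not_channelIndependent_cycleChannels_three (b : Fin 4) :
    ({a | ¬(ChannelIndependent (cycleChannels 3) a b ∧ b < a)} : Finset (Fin 4)) =
      if b = 0 then {0, 1, 3} else if b = 1 then {0, 1, 2} else univ := by
  revert b
  decide

-- `7/2 ≥ 2 + √2`, the growth rate of the trace monoid of the 4-cycle; any base up to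
-- `2 + √3` suffices.
theorem card_isLexNormal_cycleChannels_three_le (n : ℕ) :
    (#{x ∈ wordsOfLength (Fin 4) (n + 1) | IsLexNormal (cycleChannels 3) x} : ℝ) ≤
      5 * (7 / 2) ^ n := by
  let w : Fin 4 → ℝ := ![1, 1, 3 / 2, 3 / 2]
  have hw : ∀ b, ∑ a with ¬(ChannelIndependent (cycleChannels 3) a b ∧ b < a), w a ≤
      7 / 2 * w b := by
    intro b
    rw [filter_not_channelIndependent_cycleChannels_three]
    fin_cases b <;> simp [w, Fin.sum_univ_four] <;> norm_num
  have h := card_isChain_le (α := Fin 4) _ w (fun a => by fin_cases a <;> norm_num [w])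
    (by norm_num) hw n
  have hsum : ∑ b, w b = 5 := by
    simp [w, Fin.sum_univ_four]
    norm_num
  rw [hsum, mul_comm] at h
  exact h

theorem ncard_channelOutputs_cycleChannels_three_le (n : ℕ) :
    ((channelOutputs (cycleChannels 3) n).ncard : ℝ) ≤ 5 * (7 / 2) ^ n := by
  rcases n with _ | n
  · have h := ncard_channelOutputs_le_pow (cycleChannels 3) 0
    rw [pow_zero] at h
    calc ((channelOutputs (cycleChannels 3) 0).ncard : ℝ) ≤ 1 := by exact_mod_cast h
      _ ≤ 5 * (7 / 2) ^ 0 := by norm_num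
  calc ((channelOutputs (cycleChannels 3) (n + 1)).ncard : ℝ)
      ≤ #{x ∈ wordsOfLength (Fin 4) (n + 1) | IsLexNormal (cycleChannels 3) x} := by
        exact_mod_cast ncard_channelOutputs_le_card_isLexNormal _ _
    _ ≤ 5 * (7 / 2) ^ n := card_isLexNormal_cycleChannels_three_le n
    _ ≤ 5 * (7 / 2) ^ (n + 1) := by gcongr <;> norm_num

theorem capacity_cycle_four_le_logb_seven_halves {σ : Fin 4 → Fin q}
    {𝓘 : Fin 4 → Finset (Fin q)} (hq : 1 < q) (hσ : Function.Injective σ)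
    (h𝓘 : ∀ i, 𝓘 i = {σ (i - 1), σ i}) :
    capacity 𝓘 ≤ Real.logb q (7 / 2) := by
  refine capacity_le_logb_of_ncard_le hq 𝓘 1 (K := 5) (by norm_num) (by norm_num) fun n => ?_
  rw [eq_image_cycleChannels h𝓘]
  calc ((channelOutputs (fun i => (cycleChannels 3 i).image σ) n).ncard : ℝ)
      ≤ ∑ m ∈ range (n + 1), ((channelOutputs (cycleChannels 3) m).ncard : ℝ) := by
        exact_mod_cast ncard_channelOutputs_image_le hσ _ n
    _ ≤ ∑ m ∈ range (n + 1), 5 * (7 / 2 : ℝ) ^ n := by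
        refine sum_le_sum fun m hm => (ncard_channelOutputs_cycleChannels_three_le m).trans ?_
        gcongr
        · norm_num
        · exact Nat.lt_succ_iff.1 (mem_range.1 hm)
    _ = 5 * (n + 1) ^ 1 * (7 / 2) ^ n := by
        rw [sum_const, card_range, nsmul_eq_mul]
        push_cast
        ring

theorem logb_two_add_sqrt_three :
    Real.logb 2 (2 + √3) = 1 / √3 + (1 + 1 / √3) * binH (2 - √3) := by
  have h3 : √3 ^ 2 = 3 := Real.sq_sqrt (by norm_num)
  set L := Real.logb 2 (2 + √3)
  have hinv : 2 - √3 = (2 + √3)⁻¹ := eq_inv_of_mul_eq_one_left (by nlinarith)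
  have hL₁ : Real.logb 2 (2 - √3) = -L := by rw [hinv, Real.logb_inv]
  have hL₂ : Real.logb 2 (√3 - 1) = (1 - L) / 2 := by
    have hsq : (√3 - 1) ^ 2 = 2 * (2 + √3)⁻¹ := by
      rw [← hinv]
      linear_combination h3
    have hc := congrArg (Real.logb 2) hsq
    rw [Real.logb_pow, Real.logb_mul (by norm_num) (by positivity), Real.logb_inv,
      Real.logb_self_eq_one (by norm_num)] at hc
    push_cast at hc
    linarith
  rw [binH, hL₁, show 1 - (2 - √3) = √3 - 1 by ring, hL₂]
  field_simp
  linear_combination (L + 1) * h3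

end FourCycle

theorem capacity_of_cycle_bounds_general (q s : ℕ) (hq : 2 ≤ q)
    (σ : Fin (s + 1) → Fin q) (hσ : Function.Injective σ)
    (𝓘 : Fin (s + 1) → Finset (Fin q))
    (h𝓘 : ∀ i : Fin (s + 1), 𝓘 i = {σ (i - 1), σ i})
    (τ : Fin (s + 1) → Fin q) (hτ : Function.Injective τ)
    (𝓙 : Fin s → Finset (Fin q))
    (h𝓙 : ∀ i : Fin s, 𝓙 i = {τ i.castSucc, τ i.succ}) :
    capacity 𝓙 ≤ capacity 𝓘 ∧
    (s + 1 = 4 → capacity 𝓘 ≤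
      (1 / Real.sqrt 3 + (1 + 1 / Real.sqrt 3) * binH (2 - Real.sqrt 3)) *
        Real.logb q 2) ∧
    (5 ≤ s + 1 → capacity 𝓘 ≤ Real.logb q 4) := by
  refine ⟨capacity_path_le_capacity_cycle hq hσ h𝓘 hτ h𝓙, fun h4 => ?_,
    fun _ => capacity_cycle_le_logb_four hq hσ h𝓘⟩
  obtain rfl : s = 3 := by omega
  calc capacity 𝓘 ≤ Real.logb q (7 / 2) := capacity_cycle_four_le_logb_seven_halves hq hσ h𝓘
    _ ≤ Real.logb q (2 + √3) := Real.logb_le_logb_of_le (by exact_mod_cast hq) (by norm_num)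
        (by nlinarith [Real.sq_sqrt (show (0 : ℝ) ≤ 3 by norm_num), Real.sqrt_nonneg 3])
    _ = _ := by rw [← logb_two_add_sqrt_three, mul_comm, Real.mul_logb] <;> norm_num

/-- bounds on the capacity of a cycle of length `t = s+1 ≥ 4`:
the capacity of a path of length `t−1` is a lower bound, and the stated upper
bounds hold for `t = 4` and `t ≥ 5`. -/
theorem capacity_of_cycle_bounds (q s : ℕ) (hq : 2 ≤ q) (ht : 4 ≤ s + 1)
    (σ : Fin (s + 1) → Fin q) (hσ : Function.Injective σ)
    (𝓘 : Fin (s + 1) → Finset (Fin q))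
    (h𝓘 : ∀ i : Fin (s + 1), 𝓘 i = {σ (i - 1), σ i})
    (τ : Fin (s + 1) → Fin q) (hτ : Function.Injective τ)
    (𝓙 : Fin s → Finset (Fin q))
    (h𝓙 : ∀ i : Fin s, 𝓙 i = {τ i.castSucc, τ i.succ}) :
    capacity 𝓙 ≤ capacity 𝓘 ∧
    (s + 1 = 4 → capacity 𝓘 ≤
      (1 / Real.sqrt 3 + (1 + 1 / Real.sqrt 3) * binH (2 - Real.sqrt 3)) *
        Real.logb q 2) ∧
    (5 ≤ s + 1 → capacity 𝓘 ≤ Real.logb q 4) :=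
  capacity_of_cycle_bounds_general q s hq σ hσ 𝓘 h𝓘 τ hτ 𝓙 h𝓙
end

section
/- The function f(t) = t·H(1/t) − log₂ t is strictly increasing on the real interval (1, ∞), and lim_{t→∞} f(t) = log₂ e. -/
/-! With `s = t - 1` the function equals `s · log₂ (1 + 1/s)`. Its derivative in `s` is
`(log (1 + 1/s) - 1/(s + 1)) / log 2`, positive by `log x < x - 1` at `x = s/(s + 1)`, and
`s · log (1 + 1/s) → 1` is the classical limit defining `e`. -/

open Real Filter Set

lemma inv_add_one_lt_log_one_add_one_div {s : ℝ} (hs : 0 < s) : (s + 1)⁻¹ < log (1 + 1 / s) := by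
  have hpos : 0 < 1 + 1 / s := by positivity
  have hne : 1 + 1 / s ≠ 1 := by simp [hs.ne']
  have key := log_lt_sub_one_of_pos (inv_pos.mpr hpos) (inv_ne_one.mpr hne)
  have hinv : (1 + 1 / s)⁻¹ = 1 - (s + 1)⁻¹ := by field_simp; ring
  rw [log_inv, hinv] at key
  linarith

lemma hasDerivAt_mul_log_one_add_one_div {s : ℝ} (hs : 0 < s) :
    HasDerivAt (fun x : ℝ => x * log (1 + 1 / x)) (log (1 + 1 / s) - (s + 1)⁻¹) s := by
  have hinner : HasDerivAt (fun x : ℝ => 1 + 1 / x) (-(s ^ 2)⁻¹) s := by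
    simpa using (hasDerivAt_inv hs.ne').const_add 1
  refine ((hasDerivAt_id' s).fun_mul (hinner.log (by positivity))).congr_deriv ?_
  field_simp
  ring

lemma strictMonoOn_mul_log_one_add_one_div :
    StrictMonoOn (fun s : ℝ => s * log (1 + 1 / s)) (Ioi 0) := by
  refine strictMonoOn_of_deriv_pos (convex_Ioi 0)
    (fun s hs => (hasDerivAt_mul_log_one_add_one_div hs).continuousAt.continuousWithinAt)
    fun s hs => ?_
  rw [interior_Ioi] at hs
  rw [(hasDerivAt_mul_log_one_add_one_div hs).deriv]
  exact sub_pos.mpr (inv_add_one_lt_log_one_add_one_div hs)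

lemma mul_binH_one_div_sub_logb_eq {t : ℝ} (ht : 1 < t) :
    t * binH (1 / t) - logb 2 t = (t - 1) * log (1 + 1 / (t - 1)) / log 2 := by
  have ht0 : 0 < t := by linarith
  have hs : 0 < t - 1 := by linarith
  have h1 : 1 - 1 / t = (t - 1) / t := by field_simp
  have h2 : 1 + 1 / (t - 1) = t / (t - 1) := by field_simp; ring
  rw [binH, h1, h2, logb, logb, logb, one_div, log_inv, log_div hs.ne' ht0.ne',
    log_div ht0.ne' hs.ne']
  field_simp
  ring

/-- `t ↦ t·H(1/t) − log₂ t` is strictly increasing on `(1,∞)` and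
tends to `log₂ e` at infinity. -/
theorem tH_sub_log_strictMono_tendsto :
    StrictMonoOn (fun t : ℝ => t * binH (1 / t) - Real.logb 2 t) (Set.Ioi (1 : ℝ)) ∧
    Filter.Tendsto (fun t : ℝ => t * binH (1 / t) - Real.logb 2 t) Filter.atTop
      (nhds (Real.logb 2 (Real.exp 1))) := by
  have hlog2 : 0 < log 2 := log_pos one_lt_two
  constructor
  · intro a (ha : 1 < a) b (hb : 1 < b) hab
    dsimp only
    rw [mul_binH_one_div_sub_logb_eq ha, mul_binH_one_div_sub_logb_eq hb]
    exact div_lt_div_of_pos_right (strictMonoOn_mul_log_one_add_one_div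
      (sub_pos.mpr ha) (sub_pos.mpr hb) (sub_lt_sub_right hab 1)) hlog2
  · have hlim := ((tendsto_mul_log_one_add_div_atTop 1).comp
      (tendsto_atTop_add_const_right atTop (-1) tendsto_id)).div_const (log 2)
    rw [logb, log_exp]
    refine hlim.congr' ?_
    filter_upwards [eventually_gt_atTop 1] with t ht
    rw [mul_binH_one_div_sub_logb_eq ht, sub_eq_add_neg]
    rfl
end
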